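/- The group G(Ẽ₇^{(1,1)}) defined by the elliptic Dynkin presentation of type Ẽ₇^{(1,1)} is isomorphic to the group G'(Ẽ₇^{(1,1)}) defined by the new presentation with infinitely many generators tᵢ (i ∈ ℤ). -/

import Mathlib

/-!
Sending `t₀, t₁` to `t₀, t₁` defines `G → G'`: in `G'` we have `t₂ t₁ = t₁ t₀ =: c`, and if
`t₀, t₁, t₂` all braid with `s`, then `c` satisfies the elliptic relation with `s`.
Conversely, in `G` put `c = t₁ t₀` and `t₂ₖ = cᵏ t₀ c⁻ᵏ`, `t₂ₖ₊₁ = cᵏ t₁ c⁻ᵏ`, so that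
`tᵢ₊₁ tᵢ = c` for every `i ∈ ℤ`. Given `a b = t a = b u = c` with `a, b` braiding with `s`,
the elliptic relation for `c` is equivalent to `t` braiding with `s`, and also to `u` braiding
with `s`; hence the braid relations spread from `t₀, t₁` to all `tᵢ`, which defines `G' → G`.
The two maps are mutually inverse on generators, because `tᵢ tᵢ₋₁ = t₁ t₀` determines every
`tᵢ` from `t₀` and `t₁`.
-/

namespace EllipticE7

/-- Generators of `G(Ẽ₇^{(1,1)})`: `Sum.inl i` is `tᵢ` (`i ∈ {0,1}`),
`Sum.inr j` is `s_(j+1)` (so `Sum.inr 0` is `s₁`, ..., `Sum.inr 6` is `s₇`). -/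
abbrev GenG : Type := Fin 2 ⊕ Fin 7

/-- Generators of `G'(Ẽ₇^{(1,1)})`: `Sum.inl i` is `tᵢ` (`i ∈ ℤ`),
`Sum.inr j` is `s_(j+1)`. -/
abbrev GenG' : Type := ℤ ⊕ Fin 7

/-- The braid relator `(aba)⁻¹(bab)` encoding the relation `aba = bab`. -/
def br {α : Type} (a b : FreeGroup α) : FreeGroup α := (a * b * a)⁻¹ * (b * a * b)

/-- The commutation relator `(ab)⁻¹(ba)` encoding the relation `ab = ba`. -/
def cm {α : Type} (a b : FreeGroup α) : FreeGroup α := (a * b)⁻¹ * (b * a)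

/-- The pairs of (0-indexed) `s`-generators joined by an edge in the diagram,
i.e. satisfying a braid relation: (s₂,s₄), (s₄,s₅), (s₃,s₆), (s₆,s₇). -/
def braidPairs : List (Fin 7 × Fin 7) := [(1, 3), (3, 4), (2, 5), (5, 6)]

def tG (i : Fin 2) : FreeGroup GenG := FreeGroup.of (Sum.inl i)
def sG (j : Fin 7) : FreeGroup GenG := FreeGroup.of (Sum.inr j)

/-- Relators of the elliptic Dynkin presentation of `G(Ẽ₇^{(1,1)})`:
braid relations between `t₀, t₁` and `s₁, s₂, s₃`, braid relations along the edges
of the `s`-part of the diagram, the elliptic relations for `s₁, s₂, s₃`, and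
commutation relations for all remaining pairs of distinct generators except `{t₀,t₁}`. -/
def relsG : Set (FreeGroup GenG) :=
  { r | (∃ i : Fin 2, ∃ j : Fin 7, j.val < 3 ∧ r = br (tG i) (sG j)) ∨
        (∃ p ∈ braidPairs, r = br (sG p.1) (sG p.2)) ∨
        (∃ j : Fin 7, j.val < 3 ∧
          r = (sG j * tG 1 * tG 0 * sG j * tG 1 * tG 0)⁻¹ *
              (tG 1 * tG 0 * sG j * tG 1 * tG 0 * sG j)) ∨
        (∃ i j : Fin 7, i ≠ j ∧ (i, j) ∉ braidPairs ∧ (j, i) ∉ braidPairs ∧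
          r = cm (sG i) (sG j)) ∨
        (∃ i : Fin 2, ∃ j : Fin 7, 3 ≤ j.val ∧ r = cm (tG i) (sG j)) }

def tG' (i : ℤ) : FreeGroup GenG' := FreeGroup.of (Sum.inl i)
def sG' (j : Fin 7) : FreeGroup GenG' := FreeGroup.of (Sum.inr j)

/-- Relators of the new presentation of `G'(Ẽ₇^{(1,1)})`: braid relations between
every `tᵢ` (`i ∈ ℤ`) and `s₁, s₂, s₃`, the relations `tᵢtᵢ₋₁ = tⱼtⱼ₋₁`, braid relations
along the edges of the `s`-part of the diagram, commutation relations between the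
remaining pairs of distinct `s`-generators, and commutation of every `tᵢ` with
`s₄, …, s₇`. -/
def relsG' : Set (FreeGroup GenG') :=
  { r | (∃ i : ℤ, ∃ j : Fin 7, j.val < 3 ∧ r = br (tG' i) (sG' j)) ∨
        (∃ i j : ℤ, r = (tG' i * tG' (i - 1))⁻¹ * (tG' j * tG' (j - 1))) ∨
        (∃ p ∈ braidPairs, r = br (sG' p.1) (sG' p.2)) ∨
        (∃ i j : Fin 7, i ≠ j ∧ (i, j) ∉ braidPairs ∧ (j, i) ∉ braidPairs ∧
          r = cm (sG' i) (sG' j)) ∨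
        (∃ i : ℤ, ∃ j : Fin 7, 3 ≤ j.val ∧ r = cm (tG' i) (sG' j)) }

section Braid

variable {M : Type*} [Group M] {a b c s : M}

/-- With `c = ab = ta`, both sides of the elliptic relation for `c` end in `a s b`, and
cancelling it leaves the braid relation between `t` and `s`. -/
theorem braid_iff_elliptic_of_mul_eq_left {t : M} (ha : a * s * a = s * a * s)
    (hb : b * s * b = s * b * s) (hab : a * b = c) (ht : t * a = c) :
    t * s * t = s * t * s ↔ s * c * s * c = c * s * c * s := by
  have hL : s * c * s * c = s * t * s * (a * s * b) :=
    calc s * c * s * c = s * t * (a * s * a) * b := by nth_rw 1 [← ht]; rw [← hab]; group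
      _ = s * t * s * (a * s * b) := by rw [ha]; group
  have hR : c * s * c * s = t * s * t * (a * s * b) :=
    calc c * s * c * s = t * (a * s * a) * (b * s) := by nth_rw 1 [← ht]; rw [← hab]; group
      _ = t * s * a * (s * b * s) := by rw [ha]; group
      _ = t * s * (a * b) * s * b := by rw [← hb]; group
      _ = t * s * t * (a * s * b) := by rw [hab, ← ht]; group
  rw [hL, hR, mul_left_inj, eq_comm]

theorem braid_iff_elliptic_of_mul_eq_right {u : M} (ha : a * s * a = s * a * s)
    (hb : b * s * b = s * b * s) (hab : a * b = c) (hu : b * u = c) :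
    u * s * u = s * u * s ↔ s * c * s * c = c * s * c * s := by
  have hL : s * c * s * c = a * s * b * (u * s * u) :=
    calc s * c * s * c = s * a * (b * s * b) * u := by nth_rw 1 [← hab]; rw [← hu]; group
      _ = (s * a * s) * b * s * u := by rw [hb]; group
      _ = a * s * (a * b) * s * u := by rw [← ha]; group
      _ = a * s * b * (u * s * u) := by rw [hab, ← hu]; group
  have hR : c * s * c * s = a * s * b * (s * u * s) :=
    calc c * s * c * s = a * (b * s * b) * u * s := by nth_rw 1 [← hab]; rw [← hu]; group
      _ = a * s * b * (s * u * s) := by rw [hb]; group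
  rw [hL, hR, mul_right_inj]

theorem braid_of_mul_succ_eq {f : ℤ → M} (hf : ∀ i, f (i + 1) * f i = c)
    (h₀ : f 0 * s * f 0 = s * f 0 * s) (h₁ : f 1 * s * f 1 = s * f 1 * s)
    (hc : s * c * s * c = c * s * c * s) (i : ℤ) : f i * s * f i = s * f i * s := by
  suffices h : ∀ i, f i * s * f i = s * f i * s ∧ f (i + 1) * s * f (i + 1) = s * f (i + 1) * s
    from (h i).1
  intro i
  induction i using Int.induction_on with
  | zero => exact ⟨h₀, by rwa [zero_add]⟩
  | succ k ih =>
    exact ⟨ih.2, (braid_iff_elliptic_of_mul_eq_left ih.2 ih.1 (hf k) (hf (k + 1))).mpr hc⟩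
  | pred k ih =>
    have hu : f (-k) * f (-k - 1) = c := by simpa using hf (-k - 1)
    exact ⟨(braid_iff_elliptic_of_mul_eq_right ih.2 ih.1 (hf (-k)) hu).mpr hc,
      by simpa using ih.1⟩

theorem seq_eq_of_mul_succ_eq {f g : ℤ → M} (h₀ : f 0 = g 0)
    (h : ∀ i, f (i + 1) * f i = g (i + 1) * g i) : f = g := by
  funext i
  induction i using Int.induction_on with
  | zero => exact h₀
  | succ k ih => exact mul_right_cancel (ih ▸ h k)
  | pred k ih =>
    have h' := h (-k - 1)
    rw [sub_add_cancel, ih] at h'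
    exact mul_left_cancel h'

end Braid

section Sequence

variable {M N : Type*} [Group M] [Group N]

/-- The unique sequence with `t₀ = x`, `t₁ = y` and `tᵢ₊₁ tᵢ = y x` for all `i`. -/
def tSeq (x y : M) (i : ℤ) : M :=
  (y * x) ^ (i / 2) * (if i % 2 = 0 then x else y) * ((y * x) ^ (i / 2))⁻¹

theorem tSeq_two_mul (x y : M) (k : ℤ) :
    tSeq x y (2 * k) = (y * x) ^ k * x * ((y * x) ^ k)⁻¹ := by
  simp [tSeq]

theorem tSeq_two_mul_add_one (x y : M) (k : ℤ) :
    tSeq x y (2 * k + 1) = (y * x) ^ k * y * ((y * x) ^ k)⁻¹ := by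
  rw [tSeq, if_neg (by omega), show (2 * k + 1) / 2 = k by omega]

@[simp]
theorem tSeq_zero (x y : M) : tSeq x y 0 = x := by
  simpa using tSeq_two_mul x y 0

@[simp]
theorem tSeq_one (x y : M) : tSeq x y 1 = y := by
  simpa using tSeq_two_mul_add_one x y 0

theorem tSeq_succ_mul (x y : M) (i : ℤ) : tSeq x y (i + 1) * tSeq x y i = y * x := by
  obtain ⟨k, rfl | rfl⟩ := Int.even_or_odd' i
  all_goals
    have hp : (y * x) ^ k * (y * x) * ((y * x) ^ k)⁻¹ = y * x := by
      rw [(Commute.zpow_self _ _).eq, mul_inv_cancel_right]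
  · rw [tSeq_two_mul_add_one, tSeq_two_mul]
    generalize (y * x) ^ k = p at hp ⊢
    refine Eq.trans ?_ hp
    group
  · rw [show 2 * k + 1 + 1 = 2 * (k + 1) by ring, tSeq_two_mul, tSeq_two_mul_add_one,
      zpow_add_one]
    generalize (y * x) ^ k = p at hp ⊢
    refine Eq.trans ?_ hp
    group

theorem tSeq_mul_pred (x y : M) (i : ℤ) : tSeq x y i * tSeq x y (i - 1) = y * x := by
  simpa using tSeq_succ_mul x y (i - 1)

theorem tSeq_commute {x y u : M} (hx : Commute x u) (hy : Commute y u) (i : ℤ) :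
    Commute (tSeq x y i) u := by
  have hp : Commute ((y * x) ^ (i / 2)) u := (hy.mul_left hx).zpow_left _
  have hxy : Commute (if i % 2 = 0 then x else y) u := by split <;> assumption
  exact (hp.mul_left hxy).mul_left hp.inv_left

theorem map_tSeq (f : M →* N) (x y : M) (i : ℤ) : f (tSeq x y i) = tSeq (f x) (f y) i := by
  simp only [tSeq, map_mul, map_inv, map_zpow, apply_ite f]

end Sequence

section Presentations

variable {α H : Type*} [Group H]

theorem lift_inv_mul_eq_one_iff (f : α → H) (u v : FreeGroup α) :
    FreeGroup.lift f (u⁻¹ * v) = 1 ↔ FreeGroup.lift f u = FreeGroup.lift f v := by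
  rw [map_mul, map_inv, inv_mul_eq_one]

theorem lift_of_eq_one_of_mem {rels : Set (FreeGroup α)} {r : FreeGroup α}
    (hr : r ∈ rels) : FreeGroup.lift (PresentedGroup.of (rels := rels)) r = 1 := by
  rw [← PresentedGroup.one_of_mem hr]
  exact congrArg (· r) (FreeGroup.lift.apply_symm_apply (PresentedGroup.mk rels))

end Presentations

section Families

variable {H : Type*} [Group H]

structure SatisfiesG (t : Fin 2 → H) (s : Fin 7 → H) : Prop where
  braid_ts : ∀ i, ∀ j : Fin 7, j.val < 3 → t i * s j * t i = s j * t i * s j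
  braid_ss : ∀ p ∈ braidPairs, s p.1 * s p.2 * s p.1 = s p.2 * s p.1 * s p.2
  elliptic : ∀ j : Fin 7, j.val < 3 →
    s j * (t 1 * t 0) * s j * (t 1 * t 0) = (t 1 * t 0) * s j * (t 1 * t 0) * s j
  comm_ss : ∀ i j : Fin 7, i ≠ j → (i, j) ∉ braidPairs → (j, i) ∉ braidPairs →
    s i * s j = s j * s i
  comm_ts : ∀ i, ∀ j : Fin 7, 3 ≤ j.val → t i * s j = s j * t i

structure SatisfiesG' (t : ℤ → H) (s : Fin 7 → H) : Prop where
  braid_ts : ∀ i, ∀ j : Fin 7, j.val < 3 → t i * s j * t i = s j * t i * s j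
  mul_pred : ∀ i j, t i * t (i - 1) = t j * t (j - 1)
  braid_ss : ∀ p ∈ braidPairs, s p.1 * s p.2 * s p.1 = s p.2 * s p.1 * s p.2
  comm_ss : ∀ i j : Fin 7, i ≠ j → (i, j) ∉ braidPairs → (j, i) ∉ braidPairs →
    s i * s j = s j * s i
  comm_ts : ∀ i, ∀ j : Fin 7, 3 ≤ j.val → t i * s j = s j * t i

theorem lift_relsG_eq_one_iff (f : GenG → H) :
    (∀ r ∈ relsG, FreeGroup.lift f r = 1) ↔ SatisfiesG (f ∘ Sum.inl) (f ∘ Sum.inr) := by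
  constructor
  · intro h
    have rel {u v} (hr : u⁻¹ * v ∈ relsG) := (lift_inv_mul_eq_one_iff f u v).mp (h _ hr)
    exact {
      braid_ts := fun i j hj ↦ by simpa [tG, sG] using rel (Or.inl ⟨i, j, hj, rfl⟩)
      braid_ss := fun p hp ↦ by simpa [sG] using rel (Or.inr (Or.inl ⟨p, hp, rfl⟩))
      elliptic := fun j hj ↦ by
        simpa [tG, sG, mul_assoc] using rel (Or.inr (Or.inr (Or.inl ⟨j, hj, rfl⟩)))
      comm_ss := fun i j hij h₁ h₂ ↦ by
        simpa [sG] using rel (Or.inr (Or.inr (Or.inr (Or.inl ⟨i, j, hij, h₁, h₂, rfl⟩))))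
      comm_ts := fun i j hj ↦ by
        simpa [tG, sG] using rel (Or.inr (Or.inr (Or.inr (Or.inr ⟨i, j, hj, rfl⟩)))) }
  · rintro h r (⟨i, j, hj, rfl⟩ | ⟨p, hp, rfl⟩ | ⟨j, hj, rfl⟩ | ⟨i, j, hij, h₁, h₂, rfl⟩ |
      ⟨i, j, hj, rfl⟩) <;> refine (lift_inv_mul_eq_one_iff f _ _).mpr ?_
    · simpa [tG, sG] using h.braid_ts i j hj
    · simpa [sG] using h.braid_ss p hp
    · simpa [tG, sG, mul_assoc] using h.elliptic j hj
    · simpa [sG] using h.comm_ss i j hij h₁ h₂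
    · simpa [tG, sG] using h.comm_ts i j hj

theorem lift_relsG'_eq_one_iff (f : GenG' → H) :
    (∀ r ∈ relsG', FreeGroup.lift f r = 1) ↔ SatisfiesG' (f ∘ Sum.inl) (f ∘ Sum.inr) := by
  constructor
  · intro h
    have rel {u v} (hr : u⁻¹ * v ∈ relsG') := (lift_inv_mul_eq_one_iff f u v).mp (h _ hr)
    exact {
      braid_ts := fun i j hj ↦ by simpa [tG', sG'] using rel (Or.inl ⟨i, j, hj, rfl⟩)
      mul_pred := fun i j ↦ by simpa [tG'] using rel (Or.inr (Or.inl ⟨i, j, rfl⟩))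
      braid_ss := fun p hp ↦ by simpa [sG'] using rel (Or.inr (Or.inr (Or.inl ⟨p, hp, rfl⟩)))
      comm_ss := fun i j hij h₁ h₂ ↦ by
        simpa [sG'] using rel (Or.inr (Or.inr (Or.inr (Or.inl ⟨i, j, hij, h₁, h₂, rfl⟩))))
      comm_ts := fun i j hj ↦ by
        simpa [tG', sG'] using rel (Or.inr (Or.inr (Or.inr (Or.inr ⟨i, j, hj, rfl⟩)))) }
  · rintro h r (⟨i, j, hj, rfl⟩ | ⟨i, j, rfl⟩ | ⟨p, hp, rfl⟩ | ⟨i, j, hij, h₁, h₂, rfl⟩ |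
      ⟨i, j, hj, rfl⟩) <;> refine (lift_inv_mul_eq_one_iff f _ _).mpr ?_
    · simpa [tG', sG'] using h.braid_ts i j hj
    · simpa [tG'] using h.mul_pred i j
    · simpa [sG'] using h.braid_ss p hp
    · simpa [sG'] using h.comm_ss i j hij h₁ h₂
    · simpa [tG', sG'] using h.comm_ts i j hj

def SatisfiesG.lift {t : Fin 2 → H} {s : Fin 7 → H} (h : SatisfiesG t s) :
    PresentedGroup relsG →* H :=
  PresentedGroup.toGroup ((lift_relsG_eq_one_iff (Sum.elim t s)).mpr h)

def SatisfiesG'.lift {t : ℤ → H} {s : Fin 7 → H} (h : SatisfiesG' t s) :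
    PresentedGroup relsG' →* H :=
  PresentedGroup.toGroup ((lift_relsG'_eq_one_iff (Sum.elim t s)).mpr h)

@[simp]
theorem SatisfiesG.lift_of {t : Fin 2 → H} {s : Fin 7 → H} (h : SatisfiesG t s) (x : GenG) :
    h.lift (PresentedGroup.of x) = Sum.elim t s x := by
  rw [SatisfiesG.lift, PresentedGroup.toGroup.of]

@[simp]
theorem SatisfiesG'.lift_of {t : ℤ → H} {s : Fin 7 → H} (h : SatisfiesG' t s) (x : GenG') :
    h.lift (PresentedGroup.of x) = Sum.elim t s x := by
  rw [SatisfiesG'.lift, PresentedGroup.toGroup.of]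

theorem satisfiesG_of :
    SatisfiesG (PresentedGroup.of (rels := relsG) ∘ Sum.inl) (PresentedGroup.of ∘ Sum.inr) :=
  (lift_relsG_eq_one_iff _).mp fun _ ↦ lift_of_eq_one_of_mem

theorem satisfiesG'_of :
    SatisfiesG' (PresentedGroup.of (rels := relsG') ∘ Sum.inl) (PresentedGroup.of ∘ Sum.inr) :=
  (lift_relsG'_eq_one_iff _).mp fun _ ↦ lift_of_eq_one_of_mem

theorem SatisfiesG.satisfiesG' {t : Fin 2 → H} {s : Fin 7 → H} (h : SatisfiesG t s) :
    SatisfiesG' (tSeq (t 0) (t 1)) s where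
  braid_ts i j hj := braid_of_mul_succ_eq (tSeq_succ_mul _ _) (by simpa using h.braid_ts 0 j hj)
    (by simpa using h.braid_ts 1 j hj) (h.elliptic j hj) i
  mul_pred i j := by rw [tSeq_mul_pred, tSeq_mul_pred]
  braid_ss := h.braid_ss
  comm_ss := h.comm_ss
  comm_ts i j hj := (tSeq_commute (h.comm_ts 0 j hj) (h.comm_ts 1 j hj) i).eq

theorem SatisfiesG'.satisfiesG {t : ℤ → H} {s : Fin 7 → H} (h : SatisfiesG' t s) :
    SatisfiesG (fun i : Fin 2 ↦ t i) s where
  braid_ts i := h.braid_ts i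
  braid_ss := h.braid_ss
  elliptic j hj := (braid_iff_elliptic_of_mul_eq_left (h.braid_ts 1 j hj) (h.braid_ts 0 j hj) rfl
    (by simpa using h.mul_pred 2 1)).mp (h.braid_ts 2 j hj)
  comm_ss := h.comm_ss
  comm_ts i := h.comm_ts i

theorem SatisfiesG'.eq_tSeq {t : ℤ → H} {s : Fin 7 → H} (h : SatisfiesG' t s) :
    t = tSeq (t 0) (t 1) :=
  seq_eq_of_mul_succ_eq (tSeq_zero _ _).symm fun i ↦ by
    rw [tSeq_succ_mul]
    simpa using h.mul_pred (i + 1) 1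

end Families

theorem G_iso_G' : Nonempty (PresentedGroup relsG ≃* PresentedGroup relsG') := by
  let φ := satisfiesG'_of.satisfiesG.lift
  let ψ := satisfiesG_of.satisfiesG'.lift
  refine ⟨MonoidHom.toMulEquiv φ ψ ?_ ?_⟩
  · ext (i | j)
    · fin_cases i <;> simp [φ, ψ]
    · simp [φ, ψ]
  · ext (i | j)
    · simpa [φ, ψ, map_tSeq] using (congrFun satisfiesG'_of.eq_tSeq i).symm
    · simp [φ, ψ]

end EllipticE7
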